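/- arXiv:1307.4052 — 3 statements merged into one kernel-verified Lean document; each statement's English description precedes it below -/
import Mathlib

section
/- Let w_1, …, w_{r−1}, z_r, …, z_{N−1}, y_1, …, y_N be complex numbers with the w's pairwise distinct, the y's pairwise distinct, and all denominators below nonzero. Then Σ_{p=1}^{r−1} Π_{a=1, a≠p}^{r−1} [1/(w_p − w_a)] · Π_{b=r}^{N−1} (z_b − w_p) / Π_{b=1}^{N} (y_b − w_p) = Σ_{ℓ=1}^{N} Π_{b=r}^{N−1} (z_b − y_ℓ) / Π_{a=1}^{r−1} (y_ℓ − w_a) · Π_{b=1, b≠ℓ}^{N} [1/(y_b − y_ℓ)], provided 2 ≤ r ≤ N. -/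
/-!
Both sides are partial sums of `∑ᵢ Q(vᵢ) / ∏_{j ≠ i} (vᵢ - vⱼ)` over the nodes `v = (w, y)` with
`Q(ω) = ∏_b (z_b - ω)`, i.e. of the residues of `Q / ∏ⱼ (ω - vⱼ)`. By Lagrange interpolation this
total is the coefficient of `ω ^ (#nodes - 1)` in `Q`, which vanishes since
`deg Q = N - r < (r - 1) + N - 1` for `r ≥ 2`. Splitting the nodes into the `w`'s and the `y`'s,
the two parts differ only by the sign `(-1) ^ N` coming from the orientation of `y_b - ω`.
-/

open Finset Polynomial

theorem Lagrange.sum_eval_div_prod_sub_eq_zero {F ι : Type*} [Field F] [DecidableEq ι]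
    {s : Finset ι} {v : ι → F} (hvs : Set.InjOn v s) {P : F[X]} (hP : P.degree < ↑(#s - 1)) :
    ∑ i ∈ s, P.eval (v i) / ∏ j ∈ s.erase i, (v i - v j) = 0 := by
  rw [← coeff_eq_sum hvs (hP.trans_le (by exact_mod_cast Nat.sub_le _ 1)),
    coeff_eq_zero_of_degree_lt hP]

namespace Finset

section DisjSum

variable {α β : Type*} [DecidableEq α] [DecidableEq β] (s : Finset α) (t : Finset β)

theorem disjSum_erase_inl (a : α) : (s.disjSum t).erase (.inl a) = (s.erase a).disjSum t := by
  ext (x | x) <;> simp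

theorem disjSum_erase_inr (b : β) : (s.disjSum t).erase (.inr b) = s.disjSum (t.erase b) := by
  ext (x | x) <;> simp

end DisjSum

theorem prod_sub_comm {R ι : Type*} [CommRing R] (s : Finset ι) (f : ι → R) (a : R) :
    ∏ j ∈ s, (a - f j) = (-1) ^ #s * ∏ j ∈ s, (f j - a) := by
  rw [← prod_neg]
  simp_rw [neg_sub]

end Finset

theorem Set.InjOn.sumElim_disjSum {α β γ : Type*} {f : α → γ} {g : β → γ} {s : Finset α}
    {t : Finset β} (hf : Set.InjOn f s) (hg : Set.InjOn g t)
    (hfg : ∀ a ∈ s, ∀ b ∈ t, f a ≠ g b) : Set.InjOn (Sum.elim f g) (s.disjSum t) := by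
  convert Set.InjOn.sumElim (s := ((s : Set α), (t : Set β))) hf hg hfg
  ext (x | x) <;> simp

theorem Polynomial.natDegree_prod_C_sub_X_le {R ι : Type*} [CommRing R] (s : Finset ι)
    (z : ι → R) : (∏ b ∈ s, (C (z b) - X)).natDegree ≤ #s := by
  refine (natDegree_prod_le _ _).trans
    ((sum_le_sum fun b _ => ?_).trans_eq (card_eq_sum_ones s).symm)
  compute_degree

theorem Lagrange.sum_residues_left_eq_sum_residues_right {F α β : Type*} [Field F]
    [DecidableEq α] [DecidableEq β] {A : Finset α} {B : Finset β} {w : α → F} {y : β → F}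
    (hw : Set.InjOn w A) (hy : Set.InjOn y B) (hwy : ∀ p ∈ A, ∀ ℓ ∈ B, w p ≠ y ℓ)
    {Q : F[X]} (hQ : Q.degree < ↑(#A + #B - 1)) :
    ∑ p ∈ A, (∏ a ∈ A.erase p, 1 / (w p - w a)) * (Q.eval (w p) / ∏ b ∈ B, (y b - w p)) =
      ∑ ℓ ∈ B, (Q.eval (y ℓ) / ∏ a ∈ A, (y ℓ - w a)) * ∏ b ∈ B.erase ℓ, 1 / (y b - y ℓ) := by
  have key := sum_eval_div_prod_sub_eq_zero (hw.sumElim_disjSum hy hwy) (by rwa [card_disjSum])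
  simp only [sum_disjSum, Sum.elim_inl, Sum.elim_inr] at key
  set s : F := (-1) ^ #B
  have h_inl : ∀ p ∈ A, Q.eval (w p) / ∏ j ∈ (A.disjSum B).erase (.inl p),
      (w p - Sum.elim w y j) =
        s⁻¹ * ((∏ a ∈ A.erase p, 1 / (w p - w a)) * (Q.eval (w p) / ∏ b ∈ B, (y b - w p))) := by
    intro p _
    simp only [disjSum_erase_inl, prod_disjSum, Sum.elim_inl, Sum.elim_inr]
    simp only [prod_sub_comm B y (w p), one_div, prod_inv_distrib, s]
    ring
  have h_inr : ∀ ℓ ∈ B, Q.eval (y ℓ) / ∏ j ∈ (A.disjSum B).erase (.inr ℓ),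
      (y ℓ - Sum.elim w y j) =
        -(s⁻¹ * ((Q.eval (y ℓ) / ∏ a ∈ A, (y ℓ - w a)) *
          ∏ b ∈ B.erase ℓ, 1 / (y b - y ℓ))) := by
    intro ℓ hℓ
    simp only [disjSum_erase_inr, prod_disjSum, Sum.elim_inl, Sum.elim_inr]
    simp only [prod_sub_comm (B.erase ℓ) y (y ℓ), one_div, prod_inv_distrib, s]
    rw [← card_erase_add_one hℓ]
    ring
  rw [sum_congr rfl h_inl, sum_congr rfl h_inr, sum_neg_distrib, ← mul_sum, ← mul_sum,
    ← sub_eq_add_neg, ← mul_sub] at key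
  exact sub_eq_zero.mp ((mul_eq_zero.mp key).resolve_left (by simp [s]))

theorem kappa_residue_identity (N r : ℕ) (hr : 2 ≤ r) (hrN : r ≤ N)
    (w z y : ℕ → ℂ)
    (hw : ∀ p ∈ Finset.Icc 1 (r - 1), ∀ a ∈ Finset.Icc 1 (r - 1), p ≠ a → w p ≠ w a)
    (hy : ∀ b ∈ Finset.Icc 1 N, ∀ l ∈ Finset.Icc 1 N, b ≠ l → y b ≠ y l)
    (hyw : ∀ b ∈ Finset.Icc 1 N, ∀ p ∈ Finset.Icc 1 (r - 1), y b - w p ≠ 0) :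
    ∑ p ∈ Finset.Icc 1 (r - 1),
        (∏ a ∈ (Finset.Icc 1 (r - 1)).erase p, (1 / (w p - w a))) *
          ((∏ b ∈ Finset.Icc r (N - 1), (z b - w p)) /
            (∏ b ∈ Finset.Icc 1 N, (y b - w p)))
      = ∑ ℓ ∈ Finset.Icc 1 N,
          ((∏ b ∈ Finset.Icc r (N - 1), (z b - y ℓ)) /
              (∏ a ∈ Finset.Icc 1 (r - 1), (y ℓ - w a))) *
            ∏ b ∈ (Finset.Icc 1 N).erase ℓ, (1 / (y b - y ℓ)) := by
  have hw_inj : Set.InjOn w (Icc 1 (r - 1)) := fun p hp a ha h =>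
    by_contra fun hpa => hw p hp a ha hpa h
  have hy_inj : Set.InjOn y (Icc 1 N) := fun b hb l hl h =>
    by_contra fun hbl => hy b hb l hl hbl h
  have hwy : ∀ p ∈ Icc 1 (r - 1), ∀ ℓ ∈ Icc 1 N, w p ≠ y ℓ := fun p hp ℓ hℓ h =>
    hyw ℓ hℓ p hp (by rw [h, sub_self])
  have hdeg : (∏ b ∈ Icc r (N - 1), (C (z b) - X)).degree <
      ↑(#(Icc 1 (r - 1)) + #(Icc 1 N) - 1) := by
    refine (degree_le_of_natDegree_le (natDegree_prod_C_sub_X_le _ z)).trans_lt ?_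
    simp only [Nat.card_Icc]
    exact_mod_cast (by omega)
  simpa [eval_prod] using
    Lagrange.sum_residues_left_eq_sum_residues_right hw_inj hy_inj hwy hdeg
end

section
/- Let N ≥ 1 and 0 ≤ r ≤ N−1. Let w_1, …, w_{r+2}, z_1, …, z_{N−r}, y_1, …, y_N be complex numbers with the w's pairwise distinct, the z's pairwise distinct, and all denominators below nonzero, and let h be any complex number. Then Σ_{p=1}^{r+2} Π_{a=1, a≠p}^{r+2} [1/(w_a − w_p)] · Π_{b=1}^{N} (y_b − w_p − h) · Π_{b=1}^{N−r} [1/(z_b − w_p − h)] = − Σ_{q=1}^{N−r} Π_{b=1, b≠q}^{N−r} [1/(z_b − z_q)] · Π_{b=1}^{N} (y_b − z_q) / Π_{a=1}^{r+2} (w_a − z_q + h). -/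
open Finset Polynomial Lagrange

lemma sum_eval_mul_nodalWeight_eq_zero {ι : Type*} [DecidableEq ι] (s : Finset ι) (v : ι → ℂ)
    (hvs : Set.InjOn v s) (f : ℂ[X]) (hf : f.degree < (s.card - 1 : ℕ)) :
    ∑ i ∈ s, f.eval (v i) * nodalWeight s v i = 0 := by
  have hd : f.degree < (s.card : ℕ) :=
    lt_of_lt_of_le hf (by exact_mod_cast Nat.sub_le _ _)
  have hfi : f = interpolate s v (fun i => f.eval (v i)) := eq_interpolate hvs hd
  have h0 : f.coeff (s.card - 1) = 0 := coeff_eq_zero_of_degree_lt hf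
  rw [hfi, interpolate_apply, finset_sum_coeff] at h0
  rw [← h0]
  apply Finset.sum_congr rfl
  intro i hi
  rw [coeff_C_mul]
  congr 1
  have hb : Lagrange.basis s v i = C (nodalWeight s v i) * nodal (s.erase i) v := by
    rw [basis_eq_prod_sub_inv_mul_nodal_div hi, ← nodal_erase_eq_nodal_div hi]
  rw [hb, coeff_C_mul]
  have hcard : (s.erase i).card = s.card - 1 := Finset.card_erase_of_mem hi
  have hm : (nodal (s.erase i) v).coeff (s.card - 1) = 1 := by
    rw [← hcard]
    have hmon := nodal_monic (s := s.erase i) (v := v)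
    have := hmon.coeff_natDegree
    rwa [natDegree_nodal] at this
  rw [hm, mul_one]

open Finset in
theorem S_residue_identity (N r : ℕ) (hN : 1 ≤ N) (hr : r ≤ N - 1)
    (w z y : ℕ → ℂ) (h : ℂ)
    (hw : ∀ p ∈ Finset.Icc 1 (r + 2), ∀ a ∈ Finset.Icc 1 (r + 2), p ≠ a → w p ≠ w a)
    (hz : ∀ b ∈ Finset.Icc 1 (N - r), ∀ q ∈ Finset.Icc 1 (N - r), b ≠ q → z b ≠ z q)
    (hzw : ∀ b ∈ Finset.Icc 1 (N - r), ∀ p ∈ Finset.Icc 1 (r + 2), z b - w p - h ≠ 0) :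
    ∑ p ∈ Finset.Icc 1 (r + 2),
        (∏ a ∈ (Finset.Icc 1 (r + 2)).erase p, (1 / (w a - w p))) *
          (∏ b ∈ Finset.Icc 1 N, (y b - w p - h)) *
          ∏ b ∈ Finset.Icc 1 (N - r), (1 / (z b - w p - h))
      = - ∑ q ∈ Finset.Icc 1 (N - r),
            (∏ b ∈ (Finset.Icc 1 (N - r)).erase q, (1 / (z b - z q))) *
              ((∏ b ∈ Finset.Icc 1 N, (y b - z q)) /
                (∏ a ∈ Finset.Icc 1 (r + 2), (w a - z q + h))) := by
  have hrN : r ≤ N - 1 := hr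
  have hr' : r + 1 ≤ N := by omega
  -- combined node set and node function
  set v : ℕ → ℂ := fun i => if i ≤ r + 2 then w i else z (i - (r + 2)) - h with hv
  set s : Finset ℕ := Finset.Icc 1 (N + 2) with hs
  set f : ℂ[X] := ∏ b ∈ Finset.Icc 1 N, (C (y b - h) - X) with hf
  have hvw : ∀ p ∈ Finset.Icc 1 (r + 2), v p = w p := by
    intro p hp; simp only [Finset.mem_Icc] at hp; simp [hv, hp.2]
  have hvz : ∀ q ∈ Finset.Icc 1 (N - r), v (r + 2 + q) = z q - h := by
    intro q hq; simp only [Finset.mem_Icc] at hq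
    have h1 : ¬ (r + 2 + q ≤ r + 2) := by omega
    simp [hv, h1]
  -- injectivity
  have hinj : Set.InjOn v ↑s := by
    intro i hi j hj hij
    simp only [hs, Finset.coe_Icc, Set.mem_Icc] at hi hj
    by_contra hne
    rcases le_or_gt i (r + 2) with h1 | h1 <;> rcases le_or_gt j (r + 2) with h2 | h2
    · exact hw i (by simp [Finset.mem_Icc]; omega) j (by simp [Finset.mem_Icc]; omega) hne
        (by simpa [hv, h1, h2] using hij)
    · have hb : j - (r + 2) ∈ Finset.Icc 1 (N - r) := by simp [Finset.mem_Icc]; omega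
      have := hzw (j - (r + 2)) hb i (by simp [Finset.mem_Icc]; omega)
      apply this
      have : w i = z (j - (r + 2)) - h := by
        simpa [hv, h1, not_le.mpr h2] using hij
      rw [this]; ring
    · have hb : i - (r + 2) ∈ Finset.Icc 1 (N - r) := by simp [Finset.mem_Icc]; omega
      have := hzw (i - (r + 2)) hb j (by simp [Finset.mem_Icc]; omega)
      apply this
      have : w j = z (i - (r + 2)) - h := by
        simpa [hv, h2, not_le.mpr h1] using hij.symm
      rw [this]; ring
    · have hbi : i - (r + 2) ∈ Finset.Icc 1 (N - r) := by simp [Finset.mem_Icc]; omega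
      have hbj : j - (r + 2) ∈ Finset.Icc 1 (N - r) := by simp [Finset.mem_Icc]; omega
      have hne' : i - (r + 2) ≠ j - (r + 2) := by omega
      apply hz _ hbi _ hbj hne'
      have := hij
      simp only [hv, not_le.mpr h1, not_le.mpr h2, if_false] at this
      linear_combination this
  -- degree bound
  have hcard : s.card = N + 2 := by simp [hs]
  have hdeg : f.degree < ((s.card - 1 : ℕ) : WithBot ℕ) := by
    have h1 : f.degree ≤ (N : WithBot ℕ) := by
      rw [hf]
      refine le_trans (Polynomial.degree_prod_le _ _) ?_
      have h2 : ∀ b ∈ Finset.Icc 1 N, (C (y b - h) - X).degree ≤ (1 : WithBot ℕ) := by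
        intro b _
        have he : C (y b - h) - X = -(X - C (y b - h)) := by ring
        rw [he, degree_neg, degree_X_sub_C]
      refine le_trans (Finset.sum_le_sum h2) ?_
      rw [Finset.sum_const, Nat.card_Icc]
      simp [nsmul_eq_mul]
    refine lt_of_le_of_lt h1 ?_
    rw [hcard]
    exact_mod_cast by omega
  have key := sum_eval_mul_nodalWeight_eq_zero s v hinj f hdeg
  -- eval of f
  have heval : ∀ t : ℂ, f.eval t = ∏ b ∈ Finset.Icc 1 N, (y b - h - t) := by
    intro t; simp [hf, Polynomial.eval_prod]
  -- splitting of s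
  set B : Finset ℕ := (Finset.Icc 1 (N - r)).map (addLeftEmbedding (r + 2)) with hB
  have hBIcc : B = Finset.Icc (r + 3) (N + 2) := by
    rw [hB, Finset.map_add_left_Icc]
    congr 1 <;> omega
  have hsplit : s = Finset.Icc 1 (r + 2) ∪ B := by
    rw [hBIcc]; ext i; simp [hs, Finset.mem_Icc]; omega
  have hdisj : Disjoint (Finset.Icc 1 (r + 2)) B := by
    rw [hBIcc, Finset.disjoint_left]
    intro a ha hb; simp [Finset.mem_Icc] at ha hb; omega
  -- split the key sum
  have key2 : (∑ p ∈ Finset.Icc 1 (r + 2), f.eval (v p) * nodalWeight s v p)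
      + ∑ q ∈ Finset.Icc 1 (N - r), f.eval (v (r + 2 + q)) * nodalWeight s v (r + 2 + q) = 0 := by
    have hmap : ∑ x ∈ B, f.eval (v x) * nodalWeight s v x
        = ∑ q ∈ Finset.Icc 1 (N - r), f.eval (v (r + 2 + q)) * nodalWeight s v (r + 2 + q) := by
      rw [hB, Finset.sum_map]; rfl
    rw [← hmap, ← Finset.sum_union hdisj, ← hsplit, key]
  -- per-term identity for the w-poles
  have hA : ∀ p ∈ Finset.Icc 1 (r + 2),
      (∏ a ∈ (Finset.Icc 1 (r + 2)).erase p, (1 / (w a - w p))) *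
          (∏ b ∈ Finset.Icc 1 N, (y b - w p - h)) *
          ∏ b ∈ Finset.Icc 1 (N - r), (1 / (z b - w p - h))
      = (-1 : ℂ) ^ (N + 1) * (f.eval (v p) * nodalWeight s v p) := by
    intro p hp
    have hpB : p ∉ B := by
      rw [hBIcc]; simp only [Finset.mem_Icc, not_and, not_le]
      intro h3; exact absurd h3 (by have := (Finset.mem_Icc.mp hp).2; omega)
    have hsplitE : s.erase p = (Finset.Icc 1 (r + 2)).erase p ∪ B := by
      rw [hsplit, Finset.erase_union_distrib, Finset.erase_eq_of_notMem hpB]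
    have hdisjE : Disjoint ((Finset.Icc 1 (r + 2)).erase p) B :=
      hdisj.mono_left (Finset.erase_subset _ _)
    have hnw : nodalWeight s v p
        = (∏ a ∈ (Finset.Icc 1 (r + 2)).erase p, (v p - v a)⁻¹)
          * ∏ j ∈ B, (v p - v j)⁻¹ := by
      simp only [Lagrange.nodalWeight]
      rw [hsplitE, Finset.prod_union hdisjE]
    have E1 : (∏ a ∈ (Finset.Icc 1 (r + 2)).erase p, (1 / (w a - w p)))
        = (-1 : ℂ) ^ (r + 1) * ∏ a ∈ (Finset.Icc 1 (r + 2)).erase p, (v p - v a)⁻¹ := by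
      have hterm : ∀ a ∈ (Finset.Icc 1 (r + 2)).erase p,
          (1 / (w a - w p)) = (-1 : ℂ) * (v p - v a)⁻¹ := by
        intro a ha
        rw [hvw a (Finset.mem_of_mem_erase ha), hvw p hp, one_div,
          show w p - w a = -(w a - w p) by ring, inv_neg]
        ring
      rw [Finset.prod_congr rfl hterm, Finset.prod_mul_distrib, Finset.prod_const,
        Finset.card_erase_of_mem hp, Nat.card_Icc]
      norm_num
    have E2 : (∏ b ∈ Finset.Icc 1 N, (y b - w p - h)) = f.eval (v p) := by
      rw [heval, hvw p hp]
      exact Finset.prod_congr rfl fun b _ => by ring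
    have E3 : (∏ b ∈ Finset.Icc 1 (N - r), (1 / (z b - w p - h)))
        = (-1 : ℂ) ^ (N - r) * ∏ j ∈ B, (v p - v j)⁻¹ := by
      rw [hB, Finset.prod_map]
      have hterm : ∀ b ∈ Finset.Icc 1 (N - r),
          (1 / (z b - w p - h)) = (-1 : ℂ) * (v p - v (addLeftEmbedding (r + 2) b))⁻¹ := by
        intro b hb
        rw [addLeftEmbedding_apply, hvz b hb, hvw p hp, one_div,
          show w p - (z b - h) = -(z b - w p - h) by ring, inv_neg]
        ring
      rw [Finset.prod_congr rfl hterm, Finset.prod_mul_distrib, Finset.prod_const, Nat.card_Icc]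
      norm_num
    rw [E1, E2, E3, hnw,
      show ((-1 : ℂ)) ^ (N + 1) = (-1) ^ (r + 1) * (-1) ^ (N - r) by
        rw [← pow_add]; congr 1; omega]
    ring
  -- per-term identity for the z-poles
  have hBq : ∀ q ∈ Finset.Icc 1 (N - r),
      (∏ b ∈ (Finset.Icc 1 (N - r)).erase q, (1 / (z b - z q))) *
          ((∏ b ∈ Finset.Icc 1 N, (y b - z q)) /
            (∏ a ∈ Finset.Icc 1 (r + 2), (w a - z q + h)))
      = (-1 : ℂ) ^ (N + 1) * (f.eval (v (r + 2 + q)) * nodalWeight s v (r + 2 + q)) := by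
    intro q hq
    have hq1 := Finset.mem_Icc.mp hq
    have hiA : (r + 2 + q) ∉ Finset.Icc 1 (r + 2) := by
      simp only [Finset.mem_Icc, not_and, not_le]; omega
    have hsplitE : s.erase (r + 2 + q) = Finset.Icc 1 (r + 2) ∪ B.erase (r + 2 + q) := by
      rw [hsplit, Finset.erase_union_distrib, Finset.erase_eq_of_notMem hiA]
    have hdisjE : Disjoint (Finset.Icc 1 (r + 2)) (B.erase (r + 2 + q)) :=
      hdisj.mono_right (Finset.erase_subset _ _)
    have hBe : B.erase (r + 2 + q)
        = ((Finset.Icc 1 (N - r)).erase q).map (addLeftEmbedding (r + 2)) := by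
      rw [hB, Finset.map_erase]
      rfl
    have hnw : nodalWeight s v (r + 2 + q)
        = (∏ a ∈ Finset.Icc 1 (r + 2), (v (r + 2 + q) - v a)⁻¹)
          * ∏ j ∈ B.erase (r + 2 + q), (v (r + 2 + q) - v j)⁻¹ := by
      simp only [Lagrange.nodalWeight]
      rw [hsplitE, Finset.prod_union hdisjE]
    have F1 : (∏ b ∈ (Finset.Icc 1 (N - r)).erase q, (1 / (z b - z q)))
        = (-1 : ℂ) ^ (N - r - 1)
          * ∏ j ∈ B.erase (r + 2 + q), (v (r + 2 + q) - v j)⁻¹ := by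
      rw [hBe, Finset.prod_map]
      have hterm : ∀ b ∈ (Finset.Icc 1 (N - r)).erase q,
          (1 / (z b - z q)) = (-1 : ℂ) * (v (r + 2 + q) - v (addLeftEmbedding (r + 2) b))⁻¹ := by
        intro b hb
        rw [addLeftEmbedding_apply, hvz b (Finset.mem_of_mem_erase hb), hvz q hq, one_div,
          show z q - h - (z b - h) = -(z b - z q) by ring, inv_neg]
        ring
      rw [Finset.prod_congr rfl hterm, Finset.prod_mul_distrib, Finset.prod_const,
        Finset.card_erase_of_mem hq, Nat.card_Icc]
      norm_num
    have F2 : (∏ b ∈ Finset.Icc 1 N, (y b - z q)) = f.eval (v (r + 2 + q)) := by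
      rw [heval, hvz q hq]
      exact Finset.prod_congr rfl fun b _ => by ring
    have F3 : (∏ a ∈ Finset.Icc 1 (r + 2), (w a - z q + h))⁻¹
        = (-1 : ℂ) ^ (r + 2) * ∏ a ∈ Finset.Icc 1 (r + 2), (v (r + 2 + q) - v a)⁻¹ := by
      rw [← Finset.prod_inv_distrib]
      have hterm : ∀ a ∈ Finset.Icc 1 (r + 2),
          (w a - z q + h)⁻¹ = (-1 : ℂ) * (v (r + 2 + q) - v a)⁻¹ := by
        intro a ha
        rw [hvz q hq, hvw a ha,
          show z q - h - w a = -(w a - z q + h) by ring, inv_neg]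
        ring
      rw [Finset.prod_congr rfl hterm, Finset.prod_mul_distrib, Finset.prod_const, Nat.card_Icc]
      norm_num
    rw [div_eq_mul_inv, F1, F2, F3, hnw,
      show ((-1 : ℂ)) ^ (N + 1) = (-1) ^ (N - r - 1) * (-1) ^ (r + 2) by
        rw [← pow_add]; congr 1; omega]
    ring
  rw [Finset.sum_congr rfl hA, Finset.sum_congr rfl hBq, ← Finset.mul_sum, ← Finset.mul_sum]
  linear_combination ((-1 : ℂ) ^ (N + 1)) * key2
end

section
/- Let y_1, …, y_N be pairwise distinct complex numbers. The rational function W(λ) = Σ_{p=1}^{N} [1/(λ − y_p − iħ)] Π_{s≠p} (λ − y_s)/((y_p − y_s + iħ)(y_p − y_s)) − Π_{ℓ=1}^{N} 1/(λ − y_ℓ − iħ) satisfies, for each index r with 1 ≤ r ≤ N, W(y_r) = − Π_{ℓ=1}^{N} 1/(y_r − y_ℓ + iħ) − Π_{ℓ=1}^{N} 1/(y_r − y_ℓ − iħ), provided ħ ≠ 0 and all the denominators involved are nonzero. -/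
open Finset

/-- Only `p = r` survives: for `p ≠ r` the product contains the factor `x r - x r = 0`. -/
theorem Finset.sum_mul_prod_erase_sub_div_of_mem {ι K : Type*} [DecidableEq ι] [Field K]
    {S : Finset ι} {x : ι → K} (hx : Set.InjOn x S) (a : ι → K) (d : ι → ι → K) {r : ι}
    (hr : r ∈ S) :
    ∑ p ∈ S, a p * ∏ s ∈ S.erase p, (x r - x s) / (d p s * (x p - x s))
      = a r * ∏ s ∈ S.erase r, 1 / d r s := by
  rw [sum_eq_single_of_mem r hr]
  · congr 1
    refine prod_congr rfl fun s hs => ?_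
    have hrs : x r - x s ≠ 0 :=
      sub_ne_zero.mpr fun h => (mem_erase.mp hs).1 (hx hr (mem_erase.mp hs).2 h).symm
    rw [mul_comm, ← div_div, div_self hrs]
  · intro p _ hpr
    rw [prod_eq_zero (mem_erase.mpr ⟨Ne.symm hpr, hr⟩) (by rw [sub_self, zero_div]), mul_zero]

theorem W_eval_at_interpolation_general (N : ℕ) (y : ℕ → ℂ) (h : ℂ)
    (hy : ∀ p ∈ Finset.Icc 1 N, ∀ s ∈ Finset.Icc 1 N, p ≠ s → y p ≠ y s)
    (r : ℕ) (hr : r ∈ Finset.Icc 1 N) :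
    (∑ p ∈ Finset.Icc 1 N, (1 / (y r - y p - Complex.I * h)) *
        ∏ s ∈ (Finset.Icc 1 N).erase p,
          (y r - y s) / ((y p - y s + Complex.I * h) * (y p - y s)))
      - ∏ ℓ ∈ Finset.Icc 1 N, 1 / (y r - y ℓ - Complex.I * h)
    = - (∏ ℓ ∈ Finset.Icc 1 N, 1 / (y r - y ℓ + Complex.I * h))
      - ∏ ℓ ∈ Finset.Icc 1 N, 1 / (y r - y ℓ - Complex.I * h) := by
  have hinj : Set.InjOn y (Finset.Icc 1 N) := fun p hp s hs => not_imp_not.mp (hy p hp s hs)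
  rw [sum_mul_prod_erase_sub_div_of_mem hinj _ _ hr,
    ← mul_prod_erase _ (fun ℓ => 1 / (y r - y ℓ + Complex.I * h)) hr]
  simp only [sub_self, zero_sub, zero_add, one_div_neg_eq_neg_one_div]
  ring

theorem W_eval_at_interpolation (N : ℕ) (y : ℕ → ℂ) (h : ℂ) (hh : h ≠ 0)
    (hy : ∀ p ∈ Finset.Icc 1 N, ∀ s ∈ Finset.Icc 1 N, p ≠ s → y p ≠ y s)
    (hplus : ∀ p ∈ Finset.Icc 1 N, ∀ s ∈ Finset.Icc 1 N, y p - y s + Complex.I * h ≠ 0)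
    (hminus : ∀ p ∈ Finset.Icc 1 N, ∀ s ∈ Finset.Icc 1 N, y p - y s - Complex.I * h ≠ 0)
    (r : ℕ) (hr : r ∈ Finset.Icc 1 N) :
    (∑ p ∈ Finset.Icc 1 N, (1 / (y r - y p - Complex.I * h)) *
        ∏ s ∈ (Finset.Icc 1 N).erase p,
          (y r - y s) / ((y p - y s + Complex.I * h) * (y p - y s)))
      - ∏ ℓ ∈ Finset.Icc 1 N, 1 / (y r - y ℓ - Complex.I * h)
    = - (∏ ℓ ∈ Finset.Icc 1 N, 1 / (y r - y ℓ + Complex.I * h))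
      - ∏ ℓ ∈ Finset.Icc 1 N, 1 / (y r - y ℓ - Complex.I * h) :=
  W_eval_at_interpolation_general N y h hy r hr
end
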